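/- arXiv:1904.09451 — 2 statements merged into one kernel-verified Lean document; each statement's English description precedes it below -/
import Mathlib

section
/- Let {φ_x : x∈Ω} and {ψ_y : y∈Ω} be two mutually unbiased bases of a 2-dimensional complex Hilbert space H with |Ω| = 2, and let λ, μ ∈ ℝ with λ² + μ² = 1. Then the pair of uniformly noisy observables (A_λ, B_μ) belongs to CO(Ω) (i.e., A_λ and B_μ are compatible) but is not an extreme point of the convex set CO(Ω) of all compatible pairs of observables. -/
open scoped InnerProductSpace

noncomputable section

/-- An observable with outcome set `Ω`: positive semidefinite operators summing to `1`. -/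
def IsObservable {Ω H : Type*} [Fintype Ω] [NormedAddCommGroup H] [InnerProductSpace ℂ H]
    [CompleteSpace H] (A : Ω → H →L[ℂ] H) : Prop :=
  (∀ x, (A x).IsPositive) ∧ (∑ x, A x) = 1

/-- `C` is a joint observable of `A` and `B`. -/
def IsJointObservable {Ω H : Type*} [Fintype Ω] [NormedAddCommGroup H] [InnerProductSpace ℂ H]
    [CompleteSpace H] (C : Ω × Ω → H →L[ℂ] H) (A B : Ω → H →L[ℂ] H) : Prop :=
  IsObservable C ∧ (∀ x, (∑ y, C (x, y)) = A x) ∧ (∀ y, (∑ x, C (x, y)) = B y)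

/-- The set of all compatible pairs of observables. -/
def CO (Ω H : Type*) [Fintype Ω] [NormedAddCommGroup H] [InnerProductSpace ℂ H]
    [CompleteSpace H] : Set ((Ω → H →L[ℂ] H) × (Ω → H →L[ℂ] H)) :=
  {AB | ∃ C, IsJointObservable C AB.1 AB.2}

/-- The rank-one operator `|φ⟩⟨φ|`. -/
def outer {H : Type*} [NormedAddCommGroup H] [InnerProductSpace ℂ H] (φ : H) : H →L[ℂ] H :=
  (innerSL ℂ φ).smulRight φ

open scoped InnerProductSpace
/-!
Put `C(x, y) = ¼ (1 + λ (2 A(x) - 1) + μ (2 B(y) - 1))`. For a vector `v`, the numbers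
`a = 2 |⟪φ x, v⟫|² - ‖v‖²` and `b = 2 |⟪ψ y, v⟫|² - ‖v‖²` are components of the Bloch vector of `v`
along two axes that are orthogonal because the bases are unbiased, so `a² + b² ≤ ‖v‖⁴`; by
Cauchy–Schwarz `4 ⟪C(x, y) v, v⟫ = ‖v‖² + λ a + μ b ≥ 0` when `λ² + μ² ≤ 1`. Thus `C` is a joint
observable of `(A_λ, B_μ)`. Its diagonal part, doubled, and its off-diagonal part, doubled, are again
observables on `Ω × Ω`, and `(A_λ, B_μ)` is the midpoint of their pairs of margins, which differ
from `(A_λ, B_μ)` unless `λ = μ = 0`.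
-/

open Finset

section Outer

variable {H : Type*} [NormedAddCommGroup H] [InnerProductSpace ℂ H]

lemma outer_apply (φ v : H) : outer φ v = ⟪φ, v⟫_ℂ • φ := rfl

lemma inner_outer_apply_self (φ v : H) : ⟪outer φ v, v⟫_ℂ = ((‖⟪φ, v⟫_ℂ‖ ^ 2 : ℝ) : ℂ) := by
  rw [outer_apply, inner_smul_left, RCLike.conj_mul]
  push_cast
  rfl

lemma outer_ne_half_smul_one {φ : H} (hφ : ‖φ‖ = 1) : outer φ ≠ (1 / 2 : ℝ) • 1 := by
  intro h
  have hφφ := congrArg (· φ) h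
  simp only [outer_apply, inner_self_eq_norm_sq_to_K, hφ, Complex.coe_algebraMap,
    Complex.ofReal_one, one_pow, one_smul, one_div, smul_apply, one_apply_eq_self] at hφφ
  have : φ = 0 := by linear_combination (norm := module) (2 : ℝ) • hφφ
  simp [this] at hφ

lemma OrthonormalBasis.sum_outer {ι : Type*} [Fintype ι] (b : OrthonormalBasis ι ℂ H) :
    ∑ i, outer (b i) = 1 := by
  ext v
  simpa [outer_apply] using b.sum_repr' v

lemma ContinuousLinearMap.IsPositive.real_smul [CompleteSpace H] {T : H →L[ℂ] H}
    (hT : T.IsPositive) {r : ℝ} (hr : 0 ≤ r) : (r • T).IsPositive := by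
  rw [← Complex.coe_smul]
  exact hT.smul_of_nonneg (by exact_mod_cast hr)

end Outer

lemma neg_le_mul_add_mul_of_sq_add_sq_le {S a b l m : ℝ} (hS : 0 ≤ S)
    (hab : a ^ 2 + b ^ 2 ≤ S ^ 2) (hlm : l ^ 2 + m ^ 2 ≤ 1) : -S ≤ l * a + m * b := by
  nlinarith [sq_nonneg (l * b - m * a), sq_nonneg (l * a + m * b),
    sq_nonneg (S + l * a + m * b)]

lemma sq_add_sq_le_of_sq_norm_eq_half {α α' c c' : ℂ} (hc : ‖c‖ ^ 2 = 1 / 2)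
    (hc' : ‖c'‖ ^ 2 = 1 / 2) :
    (2 * ‖α‖ ^ 2 - (‖α‖ ^ 2 + ‖α'‖ ^ 2)) ^ 2
      + (2 * ‖c * α + c' * α'‖ ^ 2 - (‖α‖ ^ 2 + ‖α'‖ ^ 2)) ^ 2 ≤ (‖α‖ ^ 2 + ‖α'‖ ^ 2) ^ 2 := by
  set w := c * α * (starRingEnd ℂ) (c' * α')
  have hexp : ‖c * α + c' * α'‖ ^ 2 = (‖α‖ ^ 2 + ‖α'‖ ^ 2) / 2 + 2 * w.re := by
    simp only [Complex.sq_norm, Complex.normSq_add, Complex.normSq_mul] at hc hc' ⊢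
    rw [hc, hc']
    ring
  have hw : w.re ^ 2 ≤ ‖α‖ ^ 2 * ‖α'‖ ^ 2 / 4 := calc
    w.re ^ 2 ≤ ‖w‖ ^ 2 := by
      rw [← sq_abs]; exact pow_le_pow_left₀ (abs_nonneg _) (Complex.abs_re_le_norm w) 2
    _ = ‖c‖ ^ 2 * ‖c'‖ ^ 2 * (‖α‖ ^ 2 * ‖α'‖ ^ 2) := by
      simp only [w, norm_mul, Complex.norm_conj]; ring
    _ = ‖α‖ ^ 2 * ‖α'‖ ^ 2 / 4 := by rw [hc, hc']; ring
  rw [hexp]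
  nlinarith [hw]

section TwoOutcomes

variable {Ω : Type*} [Fintype Ω] [DecidableEq Ω]

lemma Fintype.exists_ne_univ_eq_pair (hcard : Fintype.card Ω = 2) (x : Ω) :
    ∃ x', x ≠ x' ∧ (univ : Finset Ω) = {x, x'} := by
  have : #(univ.erase x) = 1 := by rw [card_erase_of_mem (mem_univ x), card_univ, hcard]
  obtain ⟨x', hx'⟩ := card_eq_one.mp this
  have hx'mem : x' ∈ univ.erase x := hx' ▸ mem_singleton_self x'
  exact ⟨x', (ne_of_mem_erase hx'mem).symm, by rw [← hx', insert_erase (mem_univ x)]⟩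

variable {H : Type*} [NormedAddCommGroup H] [InnerProductSpace ℂ H]

theorem OrthonormalBasis.sq_add_sq_le_of_mub (hcard : Fintype.card Ω = 2)
    {φ ψ : OrthonormalBasis Ω ℂ H} (hMUB : ∀ x y : Ω, ‖⟪φ x, ψ y⟫_ℂ‖ = 1 / Real.sqrt 2)
    (x y : Ω) (v : H) :
    (2 * ‖⟪φ x, v⟫_ℂ‖ ^ 2 - ‖v‖ ^ 2) ^ 2 + (2 * ‖⟪ψ y, v⟫_ℂ‖ ^ 2 - ‖v‖ ^ 2) ^ 2
      ≤ (‖v‖ ^ 2) ^ 2 := by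
  obtain ⟨x', hne, huniv⟩ := Fintype.exists_ne_univ_eq_pair hcard x
  have hv : ‖v‖ ^ 2 = ‖⟪φ x, v⟫_ℂ‖ ^ 2 + ‖⟪φ x', v⟫_ℂ‖ ^ 2 := by
    rw [← φ.sum_sq_norm_inner_right, huniv, sum_pair hne]
  have hψ : ⟪ψ y, v⟫_ℂ = ⟪ψ y, φ x⟫_ℂ * ⟪φ x, v⟫_ℂ + ⟪ψ y, φ x'⟫_ℂ * ⟪φ x', v⟫_ℂ := by
    rw [← φ.sum_inner_mul_inner, huniv, sum_pair hne]
  have hc : ∀ z, ‖⟪ψ y, φ z⟫_ℂ‖ ^ 2 = 1 / 2 := fun z => by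
    rw [← inner_conj_symm, RCLike.norm_conj, hMUB, div_pow, Real.sq_sqrt zero_le_two, one_pow]
  rw [hv, hψ]
  exact sq_add_sq_le_of_sq_norm_eq_half (hc x) (hc x')

end TwoOutcomes

section Compatibility

variable {Ω H : Type*} [Fintype Ω] [NormedAddCommGroup H] [InnerProductSpace ℂ H]
  [CompleteSpace H]

def margins (C : Ω × Ω → H →L[ℂ] H) : (Ω → H →L[ℂ] H) × (Ω → H →L[ℂ] H) :=
  (fun x => ∑ y, C (x, y), fun y => ∑ x, C (x, y))

lemma IsJointObservable.margins_eq {C : Ω × Ω → H →L[ℂ] H} {A B : Ω → H →L[ℂ] H}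
    (hC : IsJointObservable C A B) : margins C = (A, B) :=
  Prod.ext (funext hC.2.1) (funext hC.2.2)

lemma IsObservable.margins_mem_CO {C : Ω × Ω → H →L[ℂ] H} (hC : IsObservable C) :
    margins C ∈ CO Ω H :=
  ⟨C, hC, fun _ => rfl, fun _ => rfl⟩

theorem not_mem_extremePoints_CO_of_reweight {C : Ω × Ω → H →L[ℂ] H} {A B : Ω → H →L[ℂ] H}
    (hC : IsJointObservable C A B) (w : Ω × Ω → ℝ) (hw₀ : ∀ z, 0 ≤ w z) (hw₂ : ∀ z, w z ≤ 2)
    (hsum : ∑ z, w z • C z = 1) (hne : margins (fun z => w z • C z) ≠ (A, B)) :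
    (A, B) ∉ Set.extremePoints ℝ (CO Ω H) := by
  have h₁ : IsObservable (fun z => w z • C z) := ⟨fun z => (hC.1.1 z).real_smul (hw₀ z), hsum⟩
  have h₂ : IsObservable (fun z => (2 - w z) • C z) := by
    refine ⟨fun z => (hC.1.1 z).real_smul (sub_nonneg.2 (hw₂ z)), ?_⟩
    simp only [sub_smul, sum_sub_distrib, ← smul_sum, hC.1.2, hsum]
    module
  have hmid : (A, B) ∈ openSegment ℝ (margins fun z => w z • C z)
      (margins fun z => (2 - w z) • C z) := by
    refine ⟨1 / 2, 1 / 2, by norm_num, by norm_num, by norm_num, ?_⟩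
    rw [← hC.margins_eq]
    ext x : 2 <;>
    · simp only [margins, Prod.fst_add, Prod.snd_add, Prod.smul_fst, Prod.smul_snd,
        Pi.add_apply, Pi.smul_apply, smul_sum, ← sum_add_distrib]
      exact sum_congr rfl fun _ _ => by module
  exact fun hext => hne (hext.2 h₁.margins_mem_CO h₂.margins_mem_CO hmid)

end Compatibility

section NoisyMUB

variable {Ω H : Type*} [Fintype Ω] [NormedAddCommGroup H] [InnerProductSpace ℂ H]

def noisy (b : OrthonormalBasis Ω ℂ H) (t : ℝ) (x : Ω) : H →L[ℂ] H :=
  t • outer (b x) + ((1 - t) / 2) • 1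

def noisyJoint (φ ψ : OrthonormalBasis Ω ℂ H) (lam mu : ℝ) (z : Ω × Ω) : H →L[ℂ] H :=
  (lam / 2) • outer (φ z.1) + (mu / 2) • outer (ψ z.2) + ((1 - lam - mu) / 4) • 1

lemma sum_noisy (hcard : Fintype.card Ω = 2) (b : OrthonormalBasis Ω ℂ H) (t : ℝ) :
    ∑ x, noisy b t x = 1 := by
  simp only [noisy, sum_add_distrib, ← smul_sum, b.sum_outer, sum_const, card_univ, hcard]
  module

lemma margins_noisyJoint (hcard : Fintype.card Ω = 2) (φ ψ : OrthonormalBasis Ω ℂ H)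
    (lam mu : ℝ) : margins (noisyJoint φ ψ lam mu) = (noisy φ lam, noisy ψ mu) := by
  ext x : 2 <;>
  · simp only [margins, noisyJoint, noisy, sum_add_distrib, ← smul_sum, φ.sum_outer,
      ψ.sum_outer, sum_const, card_univ, hcard]
    module

variable [DecidableEq Ω]

lemma isPositive_noisyJoint (hcard : Fintype.card Ω = 2) {φ ψ : OrthonormalBasis Ω ℂ H}
    (hMUB : ∀ x y : Ω, ‖⟪φ x, ψ y⟫_ℂ‖ = 1 / Real.sqrt 2) {lam mu : ℝ}
    (hlm : lam ^ 2 + mu ^ 2 ≤ 1) (z : Ω × Ω) : (noisyJoint φ ψ lam mu z).IsPositive := by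
  rw [ContinuousLinearMap.isPositive_iff_complex]
  intro v
  have hq : ⟪noisyJoint φ ψ lam mu z v, v⟫_ℂ = ((lam / 2 * ‖⟪φ z.1, v⟫_ℂ‖ ^ 2
      + mu / 2 * ‖⟪ψ z.2, v⟫_ℂ‖ ^ 2 + (1 - lam - mu) / 4 * ‖v‖ ^ 2 : ℝ) : ℂ) := by
    simp only [noisyJoint, add_apply, smul_apply, one_apply_eq_self, inner_add_left,
      ← Complex.coe_smul, inner_smul_left, Complex.conj_ofReal,
      inner_outer_apply_self, inner_self_eq_norm_sq_to_K, RCLike.ofReal_eq_complex_ofReal]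
    push_cast
    ring
  rw [hq]
  simp only [RCLike.re_to_complex, Complex.ofReal_re, true_and]
  have := neg_le_mul_add_mul_of_sq_add_sq_le (sq_nonneg ‖v‖)
    (OrthonormalBasis.sq_add_sq_le_of_mub hcard hMUB z.1 z.2 v) hlm
  linarith

lemma sum_diagonal_smul_noisyJoint (hcard : Fintype.card Ω = 2) (φ ψ : OrthonormalBasis Ω ℂ H)
    (lam mu : ℝ) :
    ∑ z : Ω × Ω, (if z.1 = z.2 then (2 : ℝ) else 0) • noisyJoint φ ψ lam mu z = 1 := by
  rw [Fintype.sum_prod_type]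
  simp only [ite_smul, zero_smul, sum_ite_eq, mem_univ, if_true]
  simp only [noisyJoint, smul_add, sum_add_distrib, ← smul_sum, φ.sum_outer, ψ.sum_outer,
    sum_const, card_univ, hcard, ← Nat.cast_smul_eq_nsmul ℝ]
  module

lemma margins_diagonal_smul_noisyJoint_ne (hcard : Fintype.card Ω = 2)
    (φ ψ : OrthonormalBasis Ω ℂ H) {lam mu : ℝ} (hlm : lam ^ 2 + mu ^ 2 = 1) :
    margins (fun z => (if z.1 = z.2 then (2 : ℝ) else 0) • noisyJoint φ ψ lam mu z)
      ≠ (noisy φ lam, noisy ψ mu) := by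
  obtain ⟨x⟩ : Nonempty Ω := Fintype.card_pos_iff.mp (by omega)
  intro h
  have hA := congrFun (congrArg Prod.fst h) x
  have hB := congrFun (congrArg Prod.snd h) x
  simp only [margins, ite_smul, zero_smul, sum_ite_eq, sum_ite_eq', mem_univ, if_true] at hA hB
  have hmu : mu • (outer (ψ x) - (1 / 2 : ℝ) • 1) = 0 := by
    simp only [noisyJoint, noisy] at hA
    linear_combination (norm := module) hA
  have hlam : lam • (outer (φ x) - (1 / 2 : ℝ) • 1) = 0 := by
    simp only [noisyJoint, noisy] at hB
    linear_combination (norm := module) hB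
  have hmu0 := (smul_eq_zero.mp hmu).resolve_right
    (sub_ne_zero.mpr (outer_ne_half_smul_one (ψ.orthonormal.1 x)))
  have hlam0 := (smul_eq_zero.mp hlam).resolve_right
    (sub_ne_zero.mpr (outer_ne_half_smul_one (φ.orthonormal.1 x)))
  simp [hmu0, hlam0] at hlm

variable [CompleteSpace H]

lemma isJointObservable_noisyJoint (hcard : Fintype.card Ω = 2) {φ ψ : OrthonormalBasis Ω ℂ H}
    (hMUB : ∀ x y : Ω, ‖⟪φ x, ψ y⟫_ℂ‖ = 1 / Real.sqrt 2) {lam mu : ℝ}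
    (hlm : lam ^ 2 + mu ^ 2 ≤ 1) :
    IsJointObservable (noisyJoint φ ψ lam mu) (noisy φ lam) (noisy ψ mu) := by
  have hm := margins_noisyJoint hcard φ ψ lam mu
  refine ⟨⟨isPositive_noisyJoint hcard hMUB hlm, ?_⟩, congrFun (congrArg Prod.fst hm),
    congrFun (congrArg Prod.snd hm)⟩
  rw [Fintype.sum_prod_type, ← sum_noisy hcard φ lam]
  exact sum_congr rfl fun x _ => congrFun (congrArg Prod.fst hm) x

end NoisyMUB

theorem qubit_boundary_not_extreme_general
    {H : Type*} [NormedAddCommGroup H] [InnerProductSpace ℂ H] [FiniteDimensional ℂ H]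
    {Ω : Type*} [Fintype Ω] [DecidableEq Ω]
    (hcard : Fintype.card Ω = 2)
    (φ ψ : OrthonormalBasis Ω ℂ H)
    (hMUB : ∀ x y : Ω, ‖⟪φ x, ψ y⟫_ℂ‖ = 1 / Real.sqrt 2)
    (lam mu : ℝ) (hcircle : lam ^ 2 + mu ^ 2 = 1) :
    ((fun x => lam • outer (φ x) + ((1 - lam) / 2) • (1 : H →L[ℂ] H)),
     (fun y => mu • outer (ψ y) + ((1 - mu) / 2) • (1 : H →L[ℂ] H))) ∈ CO Ω H ∧
    ((fun x => lam • outer (φ x) + ((1 - lam) / 2) • (1 : H →L[ℂ] H)),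
     (fun y => mu • outer (ψ y) + ((1 - mu) / 2) • (1 : H →L[ℂ] H)))
        ∉ Set.extremePoints ℝ (CO Ω H) := by
  have hC := isJointObservable_noisyJoint hcard hMUB hcircle.le
  refine ⟨⟨_, hC⟩, not_mem_extremePoints_CO_of_reweight hC _ ?_ ?_
    (sum_diagonal_smul_noisyJoint hcard φ ψ lam mu)
    (margins_diagonal_smul_noisyJoint_ne hcard φ ψ hcircle)⟩ <;>
  · intro z
    split_ifs <;> norm_num

theorem qubit_boundary_not_extreme
    {H : Type*} [NormedAddCommGroup H] [InnerProductSpace ℂ H] [FiniteDimensional ℂ H]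
    {Ω : Type*} [Fintype Ω] [DecidableEq Ω]
    (hcard : Fintype.card Ω = 2) (hdim : Module.finrank ℂ H = 2)
    (φ ψ : OrthonormalBasis Ω ℂ H)
    (hMUB : ∀ x y : Ω, ‖⟪φ x, ψ y⟫_ℂ‖ = 1 / Real.sqrt 2)
    (lam mu : ℝ) (hcircle : lam ^ 2 + mu ^ 2 = 1) :
    ((fun x => lam • outer (φ x) + ((1 - lam) / 2) • (1 : H →L[ℂ] H)),
     (fun y => mu • outer (ψ y) + ((1 - mu) / 2) • (1 : H →L[ℂ] H))) ∈ CO Ω H ∧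
    ((fun x => lam • outer (φ x) + ((1 - lam) / 2) • (1 : H →L[ℂ] H)),
     (fun y => mu • outer (ψ y) + ((1 - mu) / 2) • (1 : H →L[ℂ] H)))
        ∉ Set.extremePoints ℝ (CO Ω H) :=
  qubit_boundary_not_extreme_general hcard φ ψ hMUB lam mu hcircle
end
end

section
/- Let Ω be a finite abelian group of order d endowed with a nondegenerate symmetric bicharacter ⟨·,·⟩, and let {φ_x : x∈Ω}, {ψ_y : y∈Ω} be two Fourier conjugate mutually unbiased bases of a d-dimensional complex Hilbert space H. Then the set of eigenvalues of the Haagerup matrix Λ equals {Re ⟨r,s⟩ : r, s ∈ Ω}. -/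
/-!
For Fourier conjugate bases every entry of `Λ` is a product of four values of the bicharacter,
and bilinearity collapses it to `Λ_{p,q} = d⁻¹ Re ⟨p₁ - q₁, p₂ - q₂⟩`. So `Λ` is a circulant
(convolution) matrix on the group `Ω × Ω`, and it is diagonalized by the characters
`χ_t(u) = ⟨t₁, u₁⟩⟨t₂, u₂⟩` of `Ω × Ω`. The eigenvalue on `χ_t` is the Fourier transform of the
kernel `u ↦ d⁻¹ Re ⟨u₁, u₂⟩`; writing `Re z = (z + z⁻¹) / 2` and summing out one variable with
the orthogonality relations, it equals `Re ⟨t₁, t₂⟩`. By Fourier inversion the characters are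
complete, so `Λ` has no other eigenvalues.
-/

open scoped InnerProductSpace

noncomputable section

/-- The Haagerup matrix of a pair of bases, with entries
`Λ_{(x,y),(z,t)} = d·Re[⟨ψ_y, φ_z⟩⟨φ_z, ψ_t⟩⟨ψ_t, φ_x⟩⟨φ_x, ψ_y⟩]`. -/
def haagerup {Ω H : Type*} [NormedAddCommGroup H] [InnerProductSpace ℂ H]
    (d : ℕ) (φ ψ : Ω → H) : Matrix (Ω × Ω) (Ω × Ω) ℝ := fun p q =>
  (d : ℝ) * (⟪ψ p.2, φ q.1⟫_ℂ * ⟪φ q.1, ψ q.2⟫_ℂ * ⟪ψ q.2, φ p.1⟫_ℂ * ⟪φ p.1, ψ p.2⟫_ℂ).re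

open scoped ComplexConjugate
open Matrix Module End

namespace Matrix

variable {n ι : Type*} [Fintype n] [DecidableEq n]

lemma hasEigenvalue_toLin'_iff {R : Type*} [CommRing R] {A : Matrix n n R} {μ : R} :
    HasEigenvalue (toLin' A) μ ↔ ∃ v ≠ 0, A *ᵥ v = μ • v := by
  simp only [hasEigenvalue_iff, Submodule.ne_bot_iff, mem_eigenspace_iff, toLin'_apply]
  exact ⟨fun ⟨v, hv, hv0⟩ => ⟨v, hv0, hv⟩, fun ⟨v, hv0, hv⟩ => ⟨v, hv, hv0⟩⟩

/-- The real or the imaginary part of the complex eigenvector is a real eigenvector. -/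
lemma hasEigenvalue_toLin'_of_map_ofReal_mulVec {A : Matrix n n ℝ} {μ : ℝ} {v : n → ℂ}
    (hv0 : v ≠ 0) (hv : A.map (↑) *ᵥ v = (μ : ℂ) • v) : HasEigenvalue (toLin' A) μ := by
  have hre : A *ᵥ (fun p => (v p).re) = μ • fun p => (v p).re := by
    ext p
    simpa [mulVec, dotProduct, Complex.re_sum] using congrArg Complex.re (congrFun hv p)
  have him : A *ᵥ (fun p => (v p).im) = μ • fun p => (v p).im := by
    ext p
    simpa [mulVec, dotProduct, Complex.im_sum] using congrArg Complex.im (congrFun hv p)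
  by_cases h : (fun p => (v p).re) = 0
  · refine hasEigenvalue_toLin'_iff.mpr ⟨_, fun h' => hv0 ?_, him⟩
    exact funext fun p => Complex.ext (congrFun h p) (congrFun h' p)
  · exact hasEigenvalue_toLin'_iff.mpr ⟨_, h, hre⟩

lemma exists_eq_of_hasEigenvalue_toLin' {A : Matrix n n ℝ} (hA : A.IsSymm) {e : ι → n → ℂ}
    {ev : ι → ℝ} (he : ∀ t, A.map (↑) *ᵥ e t = (ev t : ℂ) • e t)
    (hcomplete : ∀ w, (∀ t, e t ⬝ᵥ w = 0) → w = 0) {μ : ℝ}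
    (hμ : HasEigenvalue (toLin' A) μ) : ∃ t, μ = ev t := by
  obtain ⟨w, hw0, hw⟩ := hasEigenvalue_toLin'_iff.mp hμ
  set wc : n → ℂ := fun p => w p
  have hwc : A.map (↑) *ᵥ wc = (μ : ℂ) • wc := by
    ext p
    have := (RingHom.map_mulVec Complex.ofRealHom A w p).symm.trans
      (congrArg Complex.ofReal (congrFun hw p))
    rw [Pi.smul_apply, smul_eq_mul, Complex.ofReal_mul] at this
    exact this
  obtain ⟨t, ht⟩ : ∃ t, e t ⬝ᵥ wc ≠ 0 := by
    by_contra! h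
    exact hw0 (funext fun p => Complex.ofReal_injective (congrFun (hcomplete wc h) p))
  refine ⟨t, Complex.ofReal_injective (mul_right_cancel₀ ht ?_)⟩
  calc (μ : ℂ) * (e t ⬝ᵥ wc) = e t ⬝ᵥ (A.map (↑) *ᵥ wc) := by
        rw [hwc, dotProduct_smul, smul_eq_mul]
    _ = (A.map (↑) *ᵥ e t) ⬝ᵥ wc := by
        rw [dotProduct_mulVec, ← mulVec_transpose, (hA.map _).eq]
    _ = ev t * (e t ⬝ᵥ wc) := by
        rw [he, smul_dotProduct, smul_eq_mul]

lemma hasEigenvalue_toLin'_iff_of_complete {A : Matrix n n ℝ} (hA : A.IsSymm)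
    {e : ι → n → ℂ} {ev : ι → ℝ} (he : ∀ t, A.map (↑) *ᵥ e t = (ev t : ℂ) • e t)
    (he0 : ∀ t, e t ≠ 0) (hcomplete : ∀ w, (∀ t, e t ⬝ᵥ w = 0) → w = 0) {μ : ℝ} :
    HasEigenvalue (toLin' A) μ ↔ ∃ t, μ = ev t := by
  refine ⟨exists_eq_of_hasEigenvalue_toLin' hA he hcomplete, ?_⟩
  rintro ⟨t, rfl⟩
  exact hasEigenvalue_toLin'_of_map_ofReal_mulVec (he0 t) (he t)

end Matrix

lemma AddChar.circulant_mulVec {G R : Type*} [AddCommGroup G] [Fintype G] [CommSemiring R]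
    (ψ : AddChar G R) (v : G → R) : circulant v *ᵥ ⇑ψ = (∑ u, v (-u) * ψ u) • ⇑ψ := by
  ext p
  simp only [mulVec, dotProduct, circulant_apply, Pi.smul_apply, smul_eq_mul, Finset.sum_mul]
  refine (Fintype.sum_equiv (Equiv.addLeft p) _ _ fun u => ?_).symm
  simp only [Equiv.coe_addLeft, sub_add_cancel_left, AddChar.map_add_eq_mul]
  ring

structure IsSymmBicharacter {Ω : Type*} [Add Ω] (β : Ω → Ω → ℂ) : Prop where
  norm_eq_one : ∀ x y, ‖β x y‖ = 1
  symm : ∀ x y, β x y = β y x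
  map_add_left : ∀ x₁ x₂ y, β (x₁ + x₂) y = β x₁ y * β x₂ y

/-- The multiplicative analogue of `LinearMap.SeparatingLeft`. -/
def MulSeparatingLeft {Ω : Type*} [Zero Ω] (β : Ω → Ω → ℂ) : Prop :=
  ∀ x, (∀ y, β x y = 1) → x = 0

def prodBicharacter {Ω : Type*} (β : Ω → Ω → ℂ) (p q : Ω × Ω) : ℂ := β p.1 q.1 * β p.2 q.2

namespace IsSymmBicharacter

variable {Ω : Type*} [AddCommGroup Ω] {β : Ω → Ω → ℂ}

lemma map_add_right (hβ : IsSymmBicharacter β) (x y₁ y₂ : Ω) :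
    β x (y₁ + y₂) = β x y₁ * β x y₂ := by
  rw [hβ.symm, hβ.map_add_left, hβ.symm y₁, hβ.symm y₂]

lemma map_zero_right (hβ : IsSymmBicharacter β) (x : Ω) : β x 0 = 1 := by
  have hne : β x 0 ≠ 0 := norm_ne_zero_iff.mp (by rw [hβ.norm_eq_one]; exact one_ne_zero)
  simpa [hne] using (hβ.map_add_right x 0 0).symm

def toAddChar (hβ : IsSymmBicharacter β) (x : Ω) : AddChar Ω ℂ where
  toFun := β x
  map_zero_eq_one' := hβ.map_zero_right x
  map_add_eq_mul' := hβ.map_add_right x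

@[simp]
lemma coe_toAddChar (hβ : IsSymmBicharacter β) (x : Ω) : ⇑(hβ.toAddChar x) = β x := rfl

lemma map_neg_right (hβ : IsSymmBicharacter β) (x y : Ω) : β x (-y) = (β x y)⁻¹ :=
  (hβ.toAddChar x).map_neg_eq_inv y

lemma map_neg_left (hβ : IsSymmBicharacter β) (x y : Ω) : β (-x) y = (β x y)⁻¹ := by
  rw [hβ.symm, hβ.map_neg_right, hβ.symm]

lemma map_neg_neg (hβ : IsSymmBicharacter β) (x y : Ω) : β (-x) (-y) = β x y := by
  rw [hβ.map_neg_left, hβ.map_neg_right, inv_inv]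

lemma conj_eq_inv (hβ : IsSymmBicharacter β) (x y : Ω) : conj (β x y) = (β x y)⁻¹ :=
  (Complex.inv_eq_conj (hβ.norm_eq_one x y)).symm

lemma map_sub_sub (hβ : IsSymmBicharacter β) (x₁ x₂ y₁ y₂ : Ω) :
    β (x₁ - x₂) (y₁ - y₂) = β x₁ y₁ * (β x₁ y₂)⁻¹ * (β x₂ y₁)⁻¹ * β x₂ y₂ := by
  simp only [sub_eq_add_neg, hβ.map_add_left, hβ.map_add_right, hβ.map_neg_left,
    hβ.map_neg_right, inv_inv]
  ring

lemma prod (hβ : IsSymmBicharacter β) : IsSymmBicharacter (prodBicharacter β) where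
  norm_eq_one p q := by simp [prodBicharacter, hβ.norm_eq_one]
  symm p q := by simp [prodBicharacter, hβ.symm p.1, hβ.symm p.2]
  map_add_left p₁ p₂ q := by
    simp only [prodBicharacter, Prod.fst_add, Prod.snd_add, hβ.map_add_left]
    ring

lemma mulSeparatingLeft_prodBicharacter (hβ : IsSymmBicharacter β) (hnd : MulSeparatingLeft β) :
    MulSeparatingLeft (prodBicharacter β) := by
  intro p hp
  refine Prod.ext (hnd _ fun y => ?_) (hnd _ fun y => ?_)
  · simpa [prodBicharacter, hβ.map_zero_right] using hp (y, 0)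
  · simpa [prodBicharacter, hβ.map_zero_right] using hp (0, y)

lemma haagerup_eq_circulant {H : Type*} [NormedAddCommGroup H] [InnerProductSpace ℂ H]
    (hβ : IsSymmBicharacter β) (d : ℕ) {φ ψ : Ω → H}
    (hFourier : ∀ x y, ⟪φ x, ψ y⟫_ℂ = (1 / Real.sqrt d : ℝ) * β x y) :
    haagerup d φ ψ = circulant fun u => (d : ℝ)⁻¹ * (β u.1 u.2).re := by
  have hconj : ∀ x y, ⟪ψ y, φ x⟫_ℂ = (1 / Real.sqrt d : ℝ) * (β x y)⁻¹ := by
    intro x y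
    rw [← inner_conj_symm, hFourier, map_mul, Complex.conj_ofReal, hβ.conj_eq_inv]
  have hscalar : (d : ℝ) * (1 / Real.sqrt d) ^ 4 = (d : ℝ)⁻¹ := by
    rcases eq_or_ne (d : ℝ) 0 with h | h
    · simp [h]
    · rw [div_pow, one_pow, show 4 = 2 * 2 from rfl, pow_mul, Real.sq_sqrt (Nat.cast_nonneg d)]
      field_simp
  ext p q
  have hprod : ⟪ψ p.2, φ q.1⟫_ℂ * ⟪φ q.1, ψ q.2⟫_ℂ * ⟪ψ q.2, φ p.1⟫_ℂ * ⟪φ p.1, ψ p.2⟫_ℂ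
      = ((1 / Real.sqrt d) ^ 4 : ℝ) * β (p.1 - q.1) (p.2 - q.2) := by
    rw [hconj, hconj, hFourier, hFourier, hβ.map_sub_sub]
    push_cast
    ring
  rw [haagerup, circulant_apply, hprod, Complex.re_ofReal_mul, ← mul_assoc, hscalar]
  rfl

variable [Fintype Ω] [DecidableEq Ω]

lemma sum_right_eq_ite (hβ : IsSymmBicharacter β) (hnd : MulSeparatingLeft β) (x : Ω) :
    ∑ y, β x y = if x = 0 then (Fintype.card Ω : ℂ) else 0 := by
  have htriv : hβ.toAddChar x = 0 ↔ x = 0 := by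
    refine ⟨fun h => hnd x fun y => DFunLike.congr_fun h y, ?_⟩
    rintro rfl
    ext y
    show β 0 y = 1
    rw [hβ.symm, hβ.map_zero_right]
  simpa only [htriv, coe_toAddChar] using (hβ.toAddChar x).sum_eq_ite

lemma sum_left_eq_ite (hβ : IsSymmBicharacter β) (hnd : MulSeparatingLeft β) (y : Ω) :
    ∑ x, β x y = if y = 0 then (Fintype.card Ω : ℂ) else 0 := by
  simp only [hβ.symm _ y]
  exact hβ.sum_right_eq_ite hnd y

lemma eq_zero_of_forall_dotProduct_eq_zero (hβ : IsSymmBicharacter β)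
    (hnd : MulSeparatingLeft β) {w : Ω → ℂ} (hw : ∀ t, β t ⬝ᵥ w = 0) : w = 0 := by
  ext p
  have hinversion : ∑ t, β t (-p) * (β t ⬝ᵥ w) = Fintype.card Ω * w p := by
    calc ∑ t, β t (-p) * (β t ⬝ᵥ w) = ∑ q, (∑ t, β t (q - p)) * w q := by
          simp only [dotProduct, Finset.mul_sum, Finset.sum_mul, sub_eq_add_neg,
            hβ.map_add_right]
          rw [Finset.sum_comm]
          exact Finset.sum_congr rfl fun _ _ => Finset.sum_congr rfl fun _ _ => by ring
      _ = Fintype.card Ω * w p := by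
          simp [hβ.sum_left_eq_ite hnd, sub_eq_zero]
  have hcard : (Fintype.card Ω : ℂ) ≠ 0 := by
    have : Nonempty Ω := ⟨0⟩
    exact_mod_cast Fintype.card_ne_zero
  simpa [hw, hcard] using hinversion.symm

lemma sum_sum_mul_mul (hβ : IsSymmBicharacter β) (hnd : MulSeparatingLeft β) (r s : Ω) :
    ∑ u, ∑ w, β u w * (β r u * β s w) = Fintype.card Ω * β (-r) s := by
  calc ∑ u, ∑ w, β u w * (β r u * β s w) = ∑ w, (∑ u, β u (w + r)) * β s w := by
        rw [Finset.sum_comm]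
        simp only [Finset.sum_mul, hβ.map_add_right, hβ.symm r]
        exact Finset.sum_congr rfl fun _ _ => Finset.sum_congr rfl fun _ _ => by ring
    _ = Fintype.card Ω * β (-r) s := by
        simp [hβ.sum_left_eq_ite hnd, add_eq_zero_iff_eq_neg, hβ.symm s]

lemma sum_sum_re_mul_mul (hβ : IsSymmBicharacter β) (hnd : MulSeparatingLeft β) (r s : Ω) :
    ∑ u, ∑ w, ((β u w).re : ℂ) * (β r u * β s w) = Fintype.card Ω * (β r s).re := by
  have hconj : ∑ u, ∑ w, conj (β u w) * (β r u * β s w) = Fintype.card Ω * β r s := by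
    calc ∑ u, ∑ w, conj (β u w) * (β r u * β s w)
        = ∑ u, ∑ w, β u w * (β r u * β (-s) w) := by
          refine Finset.sum_congr rfl fun u _ => ?_
          refine Fintype.sum_equiv (Equiv.neg Ω) _ _ fun w => ?_
          simp [hβ.conj_eq_inv, hβ.map_neg_right, hβ.map_neg_left]
      _ = Fintype.card Ω * β r s := by
          rw [hβ.sum_sum_mul_mul hnd, hβ.map_neg_neg]
  calc ∑ u, ∑ w, ((β u w).re : ℂ) * (β r u * β s w)
      = ((∑ u, ∑ w, β u w * (β r u * β s w))
          + ∑ u, ∑ w, conj (β u w) * (β r u * β s w)) / 2 := by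
        simp only [← Finset.sum_add_distrib, Finset.sum_div, Complex.re_eq_add_conj]
        exact Finset.sum_congr rfl fun _ _ => Finset.sum_congr rfl fun _ _ => by ring
    _ = Fintype.card Ω * (β r s).re := by
        rw [hconj, hβ.sum_sum_mul_mul hnd, Complex.re_eq_add_conj, hβ.conj_eq_inv,
          hβ.map_neg_left]
        ring

lemma circulant_re_mulVec_prodBicharacter (hβ : IsSymmBicharacter β)
    (hnd : MulSeparatingLeft β) (t : Ω × Ω) :
    (circulant fun u : Ω × Ω => (Fintype.card Ω : ℝ)⁻¹ * (β u.1 u.2).re).map (↑)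
        *ᵥ prodBicharacter β t = ((β t.1 t.2).re : ℂ) • prodBicharacter β t := by
  rw [map_circulant, ← hβ.prod.coe_toAddChar t, AddChar.circulant_mulVec]
  congr 1
  have hfourier : ∑ u : Ω × Ω, ((β u.1 u.2).re : ℂ) * prodBicharacter β t u
      = Fintype.card Ω * (β t.1 t.2).re := by
    rw [Fintype.sum_prod_type]
    exact hβ.sum_sum_re_mul_mul hnd t.1 t.2
  have hcard : (Fintype.card Ω : ℂ) ≠ 0 := by
    have : Nonempty Ω := ⟨0⟩
    exact_mod_cast Fintype.card_ne_zero
  simp only [Prod.fst_neg, Prod.snd_neg, hβ.map_neg_neg, coe_toAddChar, Complex.ofReal_mul,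
    Complex.ofReal_inv, Complex.ofReal_natCast, mul_assoc, ← Finset.mul_sum, hfourier]
  field_simp

end IsSymmBicharacter

theorem haagerup_eigenvalues_of_Fourier_MUB_general
    {H : Type*} [NormedAddCommGroup H] [InnerProductSpace ℂ H]
    {Ω : Type*} [Fintype Ω] [DecidableEq Ω] [AddCommGroup Ω]
    (d : ℕ) (hcard : Fintype.card Ω = d)
    (β : Ω → Ω → ℂ)
    (hβnorm : ∀ x y, ‖β x y‖ = 1)
    (hβsymm : ∀ x y, β x y = β y x)
    (hβadd : ∀ x₁ x₂ y, β (x₁ + x₂) y = β x₁ y * β x₂ y)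
    (hβnondeg : ∀ x, (∀ y, β x y = 1) → x = 0)
    (φ ψ : OrthonormalBasis Ω ℂ H)
    (hFourier : ∀ x y : Ω, ⟪φ x, ψ y⟫_ℂ = (1 / Real.sqrt d : ℝ) * β x y) :
    {μ : ℝ | Module.End.HasEigenvalue
        (Matrix.toLin' (haagerup d (fun x => φ x) (fun y => ψ y))) μ}
      = {μ : ℝ | ∃ r s : Ω, μ = (β r s).re} := by
  subst hcard
  have hβ : IsSymmBicharacter β := ⟨hβnorm, hβsymm, hβadd⟩
  have hsymm : (circulant fun u : Ω × Ω => (Fintype.card Ω : ℝ)⁻¹ * (β u.1 u.2).re).IsSymm :=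
    circulant_isSymm_iff.mpr fun u => by simp [hβ.map_neg_neg]
  have hχ0 : ∀ t, prodBicharacter β t ≠ 0 := fun t =>
    ne_of_apply_ne (· 0) (by simp [prodBicharacter, hβ.map_zero_right])
  ext μ
  rw [Set.mem_ofPred_eq, hβ.haagerup_eq_circulant _ hFourier,
    hasEigenvalue_toLin'_iff_of_complete hsymm (hβ.circulant_re_mulVec_prodBicharacter hβnondeg)
      hχ0 fun _ => hβ.prod.eq_zero_of_forall_dotProduct_eq_zero
        (hβ.mulSeparatingLeft_prodBicharacter hβnondeg)]
  simp [Prod.exists]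

theorem haagerup_eigenvalues_of_Fourier_MUB
    {H : Type*} [NormedAddCommGroup H] [InnerProductSpace ℂ H] [FiniteDimensional ℂ H]
    {Ω : Type*} [Fintype Ω] [DecidableEq Ω] [AddCommGroup Ω]
    (d : ℕ) (hcard : Fintype.card Ω = d) (hdim : Module.finrank ℂ H = d)
    (β : Ω → Ω → ℂ)
    (hβnorm : ∀ x y, ‖β x y‖ = 1)
    (hβsymm : ∀ x y, β x y = β y x)
    (hβadd : ∀ x₁ x₂ y, β (x₁ + x₂) y = β x₁ y * β x₂ y)
    (hβnondeg : ∀ x, (∀ y, β x y = 1) → x = 0)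
    (φ ψ : OrthonormalBasis Ω ℂ H)
    (hFourier : ∀ x y : Ω, ⟪φ x, ψ y⟫_ℂ = (1 / Real.sqrt d : ℝ) * β x y) :
    {μ : ℝ | Module.End.HasEigenvalue
        (Matrix.toLin' (haagerup d (fun x => φ x) (fun y => ψ y))) μ}
      = {μ : ℝ | ∃ r s : Ω, μ = (β r s).re} :=
  haagerup_eigenvalues_of_Fourier_MUB_general d hcard β hβnorm hβsymm hβadd hβnondeg φ ψ hFourier
end
end
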